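/- arXiv:1503.05383 — 2 statements merged into one kernel-verified Lean document; each statement's English description precedes it below -/
import Mathlib

section
/- Let c, λ, μ₁, μ₂ > 0 with c - λμ₁ + λμ₂ > 0. Then the number R₂ = -(λμ₁μ₂ + cμ₁ - cμ₂ - √A)/(2cμ₁μ₂), where A = c²(μ₁²+μ₂²) + λ²μ₁²μ₂² + 2cμ₁μ₂(c - λμ₁ + λμ₂), satisfies 0 < R₂ < 1/μ₁. -/
theorem R2_pos_lt_inv_mu1 (c lam mu1 mu2 : ℝ) (hc : 0 < c) (hlam : 0 < lam)
    (hmu1 : 0 < mu1) (hmu2 : 0 < mu2) (hnet : 0 < c - lam * mu1 + lam * mu2) :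
    0 < -(lam * mu1 * mu2 + c * mu1 - c * mu2 -
        Real.sqrt (c ^ 2 * (mu1 ^ 2 + mu2 ^ 2) + lam ^ 2 * mu1 ^ 2 * mu2 ^ 2
          + 2 * c * mu1 * mu2 * (c - lam * mu1 + lam * mu2))) / (2 * c * mu1 * mu2) ∧
    -(lam * mu1 * mu2 + c * mu1 - c * mu2 -
        Real.sqrt (c ^ 2 * (mu1 ^ 2 + mu2 ^ 2) + lam ^ 2 * mu1 ^ 2 * mu2 ^ 2
          + 2 * c * mu1 * mu2 * (c - lam * mu1 + lam * mu2))) / (2 * c * mu1 * mu2)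
      < 1 / mu1 := by
  set B := lam * mu1 * mu2 + c * mu1 - c * mu2 with hB
  set A := c ^ 2 * (mu1 ^ 2 + mu2 ^ 2) + lam ^ 2 * mu1 ^ 2 * mu2 ^ 2
      + 2 * c * mu1 * mu2 * (c - lam * mu1 + lam * mu2) with hA
  have hden : 0 < 2 * c * mu1 * mu2 := by positivity
  have hAeq : A = B ^ 2 + 4 * c * mu1 * mu2 * (c - lam * mu1 + lam * mu2) := by
    rw [hA, hB]; ring
  have hB2A : B ^ 2 < A := by
    rw [hAeq]; nlinarith [mul_pos (mul_pos (mul_pos hc hmu1) hmu2) hnet]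
  have hBlt : B < Real.sqrt A := by
    calc B ≤ |B| := le_abs_self B
    _ = Real.sqrt (B ^ 2) := by rw [Real.sqrt_sq_eq_abs]
    _ < Real.sqrt A := Real.sqrt_lt_sqrt (by positivity) hB2A
  constructor
  · apply div_pos _ hden
    linarith
  · rw [div_lt_div_iff₀ hden (by positivity)]
    have hub : Real.sqrt A < B + 2 * c * mu2 := by
      have hpos : 0 < B + 2 * c * mu2 := by
        have : 0 ≤ Real.sqrt A := Real.sqrt_nonneg A
        nlinarith [hBlt]
      rw [Real.sqrt_lt' hpos]
      rw [hAeq]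
      nlinarith [mul_pos (mul_pos hc hmu2) (mul_pos hlam (mul_pos hmu1 hmu1))]
    nlinarith [hub, hmu1.le]
end

section
/- Let c, λ, μ₁, μ₂ > 0 with c - λμ₁ + λμ₂ > 0. Then the cubic equation cμ₁μ₂R³ + (λμ₁μ₂ + cμ₁ - cμ₂)R² - (c - λμ₁ + λμ₂)R = 0 has exactly one positive real root, namely R₂ = -(λμ₁μ₂ + cμ₁ - cμ₂ - √A)/(2cμ₁μ₂) with A = c²(μ₁²+μ₂²) + λ²μ₁²μ₂² + 2cμ₁μ₂(c - λμ₁ + λμ₂), and this root satisfies R₂ < 1/μ₁. -/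
theorem cubic_unique_positive_root (c lam mu1 mu2 : ℝ) (hc : 0 < c) (hlam : 0 < lam)
    (hmu1 : 0 < mu1) (hmu2 : 0 < mu2) (hnet : 0 < c - lam * mu1 + lam * mu2)
    (R2 : ℝ)
    (hR2 : R2 = -(lam * mu1 * mu2 + c * mu1 - c * mu2 -
        Real.sqrt (c ^ 2 * (mu1 ^ 2 + mu2 ^ 2) + lam ^ 2 * mu1 ^ 2 * mu2 ^ 2
          + 2 * c * mu1 * mu2 * (c - lam * mu1 + lam * mu2))) / (2 * c * mu1 * mu2)) :
    (0 < R2 ∧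
      c * mu1 * mu2 * R2 ^ 3 + (lam * mu1 * mu2 + c * mu1 - c * mu2) * R2 ^ 2
        - (c - lam * mu1 + lam * mu2) * R2 = 0 ∧
      R2 < 1 / mu1) ∧
    ∀ R : ℝ, 0 < R →
      c * mu1 * mu2 * R ^ 3 + (lam * mu1 * mu2 + c * mu1 - c * mu2) * R ^ 2
        - (c - lam * mu1 + lam * mu2) * R = 0 → R = R2 := by
  have ha : (0:ℝ) < c * mu1 * mu2 := by positivity
  set A : ℝ := c ^ 2 * (mu1 ^ 2 + mu2 ^ 2) + lam ^ 2 * mu1 ^ 2 * mu2 ^ 2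
      + 2 * c * mu1 * mu2 * (c - lam * mu1 + lam * mu2) with hAdef
  have hAnn : 0 ≤ A := by
    have h4 : 0 < 4 * (c * mu1 * mu2) * (c - lam * mu1 + lam * mu2) := by positivity
    nlinarith [sq_nonneg (lam * mu1 * mu2 + c * mu1 - c * mu2)]
  set s : ℝ := Real.sqrt A with hsdef
  have hs0 : 0 ≤ s := Real.sqrt_nonneg A
  have hs2 : s ^ 2 = A := Real.sq_sqrt hAnn
  have h4ad : 0 < 4 * (c * mu1 * mu2) * (c - lam * mu1 + lam * mu2) := by positivity
  -- s > b and s > -b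
  have hsb : lam * mu1 * mu2 + c * mu1 - c * mu2 < s := by nlinarith
  have hsb' : -(lam * mu1 * mu2 + c * mu1 - c * mu2) < s := by nlinarith
  have hR2pos : 0 < R2 := by
    rw [hR2]
    apply div_pos (by linarith) (by positivity)
  have key : 2 * (c * mu1 * mu2) * R2 + (lam * mu1 * mu2 + c * mu1 - c * mu2) = s := by
    rw [hR2]; field_simp; ring
  have ksq : (2 * (c * mu1 * mu2) * R2 + (lam * mu1 * mu2 + c * mu1 - c * mu2)) ^ 2 = A := by
    rw [key]; exact hs2
  have hq4 : (4 * (c * mu1 * mu2)) * (c * mu1 * mu2 * R2 ^ 2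
      + (lam * mu1 * mu2 + c * mu1 - c * mu2) * R2 - (c - lam * mu1 + lam * mu2)) = 0 := by
    linear_combination ksq
  have hq : c * mu1 * mu2 * R2 ^ 2 + (lam * mu1 * mu2 + c * mu1 - c * mu2) * R2
      - (c - lam * mu1 + lam * mu2) = 0 := by
    rcases mul_eq_zero.mp hq4 with h | h
    · exfalso; nlinarith
    · exact h
  refine ⟨⟨hR2pos, by linear_combination R2 * hq, ?_⟩, ?_⟩
  · rw [lt_div_iff₀ hmu1]
    by_contra hle
    push_neg at hle
    have hfac : 0 ≤ (R2 * mu1 - 1) * (c * mu1 * mu2 * R2 + lam * mu1 * mu2 + c * mu1) := by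
      apply mul_nonneg (by linarith)
      positivity
    have hqmu : mu1 * (c * mu1 * mu2 * R2 ^ 2 + (lam * mu1 * mu2 + c * mu1 - c * mu2) * R2
        - (c - lam * mu1 + lam * mu2)) = 0 := by linear_combination mu1 * hq
    nlinarith [hfac, hqmu, mul_pos hlam (mul_pos hmu1 hmu1)]
  · intro R hRpos hRcube
    have hqR : c * mu1 * mu2 * R ^ 2 + (lam * mu1 * mu2 + c * mu1 - c * mu2) * R
        - (c - lam * mu1 + lam * mu2) = 0 := by
      have h0 : R * (c * mu1 * mu2 * R ^ 2 + (lam * mu1 * mu2 + c * mu1 - c * mu2) * R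
          - (c - lam * mu1 + lam * mu2)) = 0 := by linear_combination hRcube
      rcases mul_eq_zero.mp h0 with h | h
      · exact absurd h (ne_of_gt hRpos)
      · exact h
    have hfac : (R - R2) * (c * mu1 * mu2 * (R + R2)
        + (lam * mu1 * mu2 + c * mu1 - c * mu2)) = 0 := by
      linear_combination hqR - hq
    have hpos : 0 < c * mu1 * mu2 * (R + R2)
        + (lam * mu1 * mu2 + c * mu1 - c * mu2) := by
      have h1 : c * mu1 * mu2 * R2 + (lam * mu1 * mu2 + c * mu1 - c * mu2)
          = (s + (lam * mu1 * mu2 + c * mu1 - c * mu2)) / 2 := by linarith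
      have h2 : 0 < c * mu1 * mu2 * R := by positivity
      linarith
    rcases mul_eq_zero.mp hfac with h | h
    · linarith [sub_eq_zero.mp h]
    · exact absurd h (ne_of_gt hpos)
end
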